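/- Suppose a rational function f ∈ k̄(t) together with nonzero elements α₁, …, α_s ∈ k̄ and rational functions μ₁, …, μ_s ∈ 𝔽_q(t) (viewed inside k̄(t) via the inclusion 𝔽_q ⊆ k̄) satisfies the σ-difference equation (t − θ)·f^{(-1)} − f = Σ_{i=1}^{s} μ_i · α_i^{(-1)} · (t − θ). Then for every integer i ≥ 0 the rational function f is regular at t = θ^{q^i}. -/

import Mathlib

/-!
Rewrite the difference equation as `f = (t − θ)·f⁽⁻¹⁾ − ∑ μᵢ·αᵢ⁽⁻¹⁾·(t − θ)`. The sum is
regular at every `θ^{qʲ}`, because `θ^{qʲ}` is transcendental over `𝔽_q` and so is no pole of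
the `μᵢ`; and `f⁽⁻¹⁾` is regular at `a` whenever `f` is regular at `a^q`. So if `f` had a pole
at `θ^{qⁱ}`, it would have a pole at each of the pairwise distinct points `θ^{qʲ}`, `j ≥ i`,
whereas the denominator of `f` has finitely many roots.
-/

open Polynomial

/-- The ring homomorphism `K(t) → L(t)` applying a field embedding `c : K → L` to all
coefficients of the numerator and denominator of a rational function. -/
noncomputable def RatFunc.coeffMap {K L : Type*} [Field K] [Field L] (c : K →+* L) :
    RatFunc K →+* RatFunc L :=
  RatFunc.mapRingHom (Polynomial.mapRingHom c)
    (nonZeroDivisors_le_comap_nonZeroDivisors_of_injective _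
      (Polynomial.map_injective _ c.injective))

theorem Transcendental.pow_right_injective {R A : Type*} [CommRing R] [Nontrivial R] [Ring A]
    [Algebra R A] {x : A} (hx : Transcendental R x) : Function.Injective (x ^ · : ℕ → A) := by
  intro a b hab
  have hroot : Polynomial.aeval x (X ^ a - X ^ b : R[X]) = 0 := by simpa [sub_eq_zero] using hab
  have hXab : (X ^ a : R[X]) = X ^ b := sub_eq_zero.mp (transcendental_iff.mp hx _ hroot)
  simpa using congrArg natDegree hXab

namespace RatFunc

variable {K L : Type*} [Field K] [Field L]

def regularAt (a : K) : Subring (RatFunc K) where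
  carrier := {f | f.denom.eval a ≠ 0}
  mul_mem' {f g} hf hg := fun h0 => mul_ne_zero hf hg <| by
    simpa using eval_eq_zero_of_dvd_of_eval_eq_zero (denom_mul_dvd f g) h0
  one_mem' := by simp
  add_mem' {f g} hf hg := fun h0 => mul_ne_zero hf hg <| by
    simpa using eval_eq_zero_of_dvd_of_eval_eq_zero (denom_add_dvd f g) h0
  zero_mem' := by simp
  neg_mem' {f} hf := fun h0 => hf <| eval_eq_zero_of_dvd_of_eval_eq_zero
    ((denom_dvd f.denom_ne_zero).mpr ⟨-f.num, by rw [map_neg, neg_div, num_div_denom]⟩) h0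

theorem mem_regularAt {a : K} {f : RatFunc K} : f ∈ regularAt a ↔ f.denom.eval a ≠ 0 :=
  Iff.rfl

theorem C_mem_regularAt (a c : K) : C c ∈ regularAt a := by
  simp [mem_regularAt, denom_C]

theorem X_sub_C_mem_regularAt (a b : K) : (X - C b : RatFunc K) ∈ regularAt a :=
  sub_mem (by simp [mem_regularAt, denom_X]) (C_mem_regularAt a b)

theorem div_mem_regularAt {a : K} (P : K[X]) {Q : K[X]} (hQ : Q.eval a ≠ 0) :
    algebraMap K[X] (RatFunc K) P / algebraMap K[X] (RatFunc K) Q ∈ regularAt a := by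
  have hQ0 : Q ≠ 0 := by rintro rfl; simp at hQ
  exact fun h0 => hQ <| eval_eq_zero_of_dvd_of_eval_eq_zero ((denom_dvd hQ0).mpr ⟨P, rfl⟩) h0

theorem coeffMap_eq_div (c : K →+* L) (f : RatFunc K) :
    coeffMap c f =
      algebraMap L[X] (RatFunc L) (f.num.map c) / algebraMap L[X] (RatFunc L) (f.denom.map c) := by
  conv_lhs => rw [← num_div_denom f]
  rw [coeffMap, coe_mapRingHom_eq_coe_map, map_apply_div]
  rfl

theorem coeffMap_mem_regularAt {c : K →+* L} {f : RatFunc K} {x : L}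
    (h : (f.denom.map c).eval x ≠ 0) : coeffMap c f ∈ regularAt x := by
  rw [coeffMap_eq_div]
  exact div_mem_regularAt _ h

theorem coeffMap_mem_regularAt_apply (c : K →+* L) {f : RatFunc K} {b : K}
    (hf : f ∈ regularAt b) : coeffMap c f ∈ regularAt (c b) :=
  coeffMap_mem_regularAt <| by rwa [eval_map, eval₂_hom, _root_.map_ne_zero]

theorem coeffMap_mem_regularAt_of_transcendental {E : Type*} [Field E] [Algebra K E]
    (A : E →+* L) {y : E} (hy : Transcendental K y) (f : RatFunc K) :
    coeffMap (A.comp (algebraMap K E)) f ∈ regularAt (A y) :=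
  coeffMap_mem_regularAt <| by
    rw [eval_map, ← hom_eval₂, ← aeval_def, _root_.map_ne_zero]
    exact fun h0 => f.denom_ne_zero (transcendental_iff.mp hy _ h0)

theorem mem_regularAt_of_mul_coeffMap_sub_mem {ψ : K →+* K} {h f : RatFunc K} {b : K}
    (hh : h ∈ regularAt (ψ b)) (hg : h * coeffMap ψ f - f ∈ regularAt (ψ b))
    (hf : f ∈ regularAt b) : f ∈ regularAt (ψ b) := by
  rw [← sub_sub_cancel (h * coeffMap ψ f) f]
  exact sub_mem (mul_mem hh (coeffMap_mem_regularAt_apply ψ hf)) hg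

theorem mem_regularAt_of_injective {f : RatFunc K} {x : ℕ → K} (hx : Function.Injective x)
    (hstep : ∀ j, f ∈ regularAt (x (j + 1)) → f ∈ regularAt (x j)) (i : ℕ) :
    f ∈ regularAt (x i) := by
  by_contra hi
  have hpoles : ∀ j, f.denom.IsRoot (x (i + j)) := by
    intro j
    induction j with
    | zero => simpa [mem_regularAt] using hi
    | succ j ih => exact not_not.mp fun hj => hstep (i + j) hj ih
  refine f.denom_ne_zero (eq_zero_of_infinite_isRoot _ ?_)
  exact Set.infinite_of_injective_forall_mem (hx.comp (add_right_injective i)) hpoles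

end RatFunc

theorem carlitz_f_regular_at_theta_pow_general
    -- `q = p ^ m` is a prime power and `𝔽_q` is the field with `q` elements
    (p m q : ℕ) [Fact p.Prime] (hm : 0 < m) (hq : q = p ^ m)
    (Fq : Type*) [Field Fq]
    -- `k̄` is an algebraic closure of `k = 𝔽_q(θ)`, and `θ` is the image of the variable
    (kbar : Type*) [Field kbar] [CharP kbar p] [PerfectRing kbar p]
    [Algebra (RatFunc Fq) kbar]
    (θ : kbar) (hθ : θ = algebraMap (RatFunc Fq) kbar RatFunc.X)
    -- `ψ : a ↦ a^{1/q}` is the inverse of the `q`-power Frobenius of `k̄`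
    (ψ : kbar ≃+* kbar) (hψ : ψ = (iterateFrobeniusEquiv kbar p m).symm)
    -- the data `f`, `αᵢ`, `μᵢ`
    (s : ℕ) (α : Fin s → kbar) (μ : Fin s → RatFunc Fq)
    (f : RatFunc kbar)
    -- the σ-difference equation `(t − θ)·f⁽⁻¹⁾ − f = ∑ μᵢ·αᵢ⁽⁻¹⁾·(t − θ)`
    (heq : (RatFunc.X - RatFunc.C θ) * RatFunc.coeffMap (ψ : kbar →+* kbar) f - f =
      ∑ i, RatFunc.coeffMap
          ((algebraMap (RatFunc Fq) kbar).comp (algebraMap Fq (RatFunc Fq))) (μ i) *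
        RatFunc.C (ψ (α i)) * (RatFunc.X - RatFunc.C θ)) :
    -- for every `i ≥ 0`, `f` is regular at `t = θ^{qⁱ}`:
    -- the denominator of `f` in lowest terms does not vanish at `θ ^ q ^ i`
    ∀ i : ℕ, Polynomial.eval (θ ^ q ^ i) f.denom ≠ 0 := by
  have hq2 : 2 ≤ q := hq ▸ (Fact.out : p.Prime).two_le.trans (Nat.le_self_pow hm.ne' p)
  have hψ_pow : ∀ a : kbar, ψ (a ^ q) = a := fun a => by
    rw [hψ, hq, ← iterateFrobeniusEquiv_def, RingEquiv.symm_apply_apply]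
  have hθ_pow : ∀ n : ℕ, θ ^ n = algebraMap (RatFunc Fq) kbar (RatFunc.X ^ n) := fun n => by
    rw [hθ, map_pow]
  have hrhs_mem : ∀ j : ℕ, (RatFunc.X - RatFunc.C θ) * RatFunc.coeffMap (ψ : kbar →+* kbar) f - f ∈
      RatFunc.regularAt (θ ^ q ^ j) :=
    fun j => heq ▸ sum_mem fun i _ => by
      refine mul_mem (mul_mem ?_ ?_) (RatFunc.X_sub_C_mem_regularAt _ θ)
      · rw [hθ_pow]
        exact RatFunc.coeffMap_mem_regularAt_of_transcendental _
          (RatFunc.transcendental_X.pow (pow_pos (by omega) j)) (μ i)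
      · exact RatFunc.C_mem_regularAt _ _
  have hinj : Function.Injective fun j : ℕ => θ ^ q ^ j := fun j l h => by
    simp only [hθ_pow, (algebraMap (RatFunc Fq) kbar).injective.eq_iff] at h
    exact Nat.pow_right_injective hq2 (RatFunc.transcendental_X.pow_right_injective h)
  refine RatFunc.mem_regularAt_of_injective hinj fun j hj => ?_
  have hψj : ψ (θ ^ q ^ (j + 1)) = θ ^ q ^ j := by rw [pow_succ, pow_mul, hψ_pow]
  have hrhs := hrhs_mem j
  rw [← hψj] at hrhs ⊢
  exact RatFunc.mem_regularAt_of_mul_coeffMap_sub_mem (ψ := (ψ : kbar →+* kbar))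
    (RatFunc.X_sub_C_mem_regularAt _ θ) hrhs hj

/-- If `f ∈ k̄(t)`, nonzero `α₁, …, α_s ∈ k̄` and `μ₁, …, μ_s ∈ 𝔽_q(t)` satisfy
`(t − θ)·f⁽⁻¹⁾ − f = ∑ μᵢ·αᵢ⁽⁻¹⁾·(t − θ)`, then `f` is regular at `t = θ^{qⁱ}` for every integer `i ≥ 0`. -/
theorem carlitz_f_regular_at_theta_pow
    -- `q = p ^ m` is a prime power and `𝔽_q` is the field with `q` elements
    (p m q : ℕ) [Fact p.Prime] (hm : 0 < m) (hq : q = p ^ m)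
    (Fq : Type*) [Field Fq] [Fintype Fq] [CharP Fq p] (hcard : Fintype.card Fq = q)
    -- `k̄` is an algebraic closure of `k = 𝔽_q(θ)`, and `θ` is the image of the variable
    (kbar : Type*) [Field kbar] [CharP kbar p] [PerfectRing kbar p]
    [Algebra (RatFunc Fq) kbar] [IsAlgClosure (RatFunc Fq) kbar]
    (θ : kbar) (hθ : θ = algebraMap (RatFunc Fq) kbar RatFunc.X)
    -- `ψ : a ↦ a^{1/q}` is the inverse of the `q`-power Frobenius of `k̄`
    (ψ : kbar ≃+* kbar) (hψ : ψ = (iterateFrobeniusEquiv kbar p m).symm)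
    -- the data `f`, `αᵢ`, `μᵢ`
    (s : ℕ) (α : Fin s → kbar) (hα : ∀ i, α i ≠ 0) (μ : Fin s → RatFunc Fq)
    (f : RatFunc kbar)
    -- the σ-difference equation `(t − θ)·f⁽⁻¹⁾ − f = ∑ μᵢ·αᵢ⁽⁻¹⁾·(t − θ)`
    (heq : (RatFunc.X - RatFunc.C θ) * RatFunc.coeffMap (ψ : kbar →+* kbar) f - f =
      ∑ i, RatFunc.coeffMap
          ((algebraMap (RatFunc Fq) kbar).comp (algebraMap Fq (RatFunc Fq))) (μ i) *
        RatFunc.C (ψ (α i)) * (RatFunc.X - RatFunc.C θ)) :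
    -- for every `i ≥ 0`, `f` is regular at `t = θ^{qⁱ}`:
    -- the denominator of `f` in lowest terms does not vanish at `θ ^ q ^ i`
    ∀ i : ℕ, Polynomial.eval (θ ^ q ^ i) f.denom ≠ 0 :=
  carlitz_f_regular_at_theta_pow_general p m q hm hq Fq kbar θ hθ ψ hψ s α μ f heq
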